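/- Fix a natural number M ≥ 1, a real p with 0 ≤ p ≤ 1, and a real β with 0 < β < 1. If K is a random variable distributed according to the binomial distribution with M trials and success probability p, then the probability that p > Bin̄(K, M, β) is at most β; that is, ∑_{k ∈ A} C(M,k)·p^k·(1−p)^{M−k} ≤ β, where A = {k ≤ M : p > Bin̄(k, M, β)}. -/
import Mathlib


open scoped BigOperators Classical

/-- The binomial CDF: `Bin_cdf(k, M, e) = ∑_{j=0}^{k} C(M,j)·e^j·(1−e)^{M−j}`. -/
noncomputable def binCdf (k M : ℕ) (e : ℝ) : ℝ :=
  ∑ j ∈ Finset.range (k + 1), (M.choose j : ℝ) * e ^ j * (1 - e) ^ (M - j)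

/-- The binomial tail inversion `Bin̄(k, M, β)`. -/
noncomputable def binInv (k M : ℕ) (β : ℝ) : ℝ :=
  sSup {e : ℝ | e ∈ Set.Icc (0:ℝ) 1 ∧ β ≤ binCdf k M e}

lemma binCdf_zero (k M : ℕ) : binCdf k M 0 = 1 := by
  unfold binCdf
  rw [Finset.sum_eq_single 0]
  · simp
  · intro j hj hj0
    simp [zero_pow hj0]
  · simp

lemma bddAbove_set (k M : ℕ) (β : ℝ) :
    BddAbove {e : ℝ | e ∈ Set.Icc (0:ℝ) 1 ∧ β ≤ binCdf k M e} := by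
  refine ⟨1, fun x hx => hx.1.2⟩

lemma binCdf_mono_k {k k' M : ℕ} (h : k ≤ k') {e : ℝ} (he0 : 0 ≤ e) (he1 : e ≤ 1) :
    binCdf k M e ≤ binCdf k' M e := by
  unfold binCdf
  apply Finset.sum_le_sum_of_subset_of_nonneg
  · exact Finset.range_subset_range.2 (by omega)
  · intro j _ _
    have h1 : (0:ℝ) ≤ 1 - e := by linarith
    positivity

lemma binInv_mono {k k' M : ℕ} (h : k ≤ k') (β : ℝ) (hβ1 : β ≤ 1) :
    binInv k M β ≤ binInv k' M β := by
  apply csSup_le_csSup (bddAbove_set k' M β)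
  · exact ⟨0, ⟨le_refl _, zero_le_one⟩, by rw [binCdf_zero]; exact hβ1⟩
  · intro x hx
    exact ⟨hx.1, le_trans hx.2 (binCdf_mono_k h hx.1.1 hx.1.2)⟩

lemma binCdf_lt_of_binInv_lt {k M : ℕ} {β p : ℝ} (hp0 : 0 ≤ p) (hp1 : p ≤ 1)
    (h : binInv k M β < p) : binCdf k M p < β := by
  by_contra hc
  push_neg at hc
  have : p ≤ binInv k M β :=
    le_csSup (bddAbove_set k M β) ⟨⟨hp0, hp1⟩, hc⟩
  linarith

/-- Holdout-method PAC guarantee: if `K ~ Binomial(M, p)`, then the probability of the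
event `p > Bin̄(K, M, β)` is at most `β`; the probability of that event is written out
as the binomial sum over `A = {k ≤ M : p > Bin̄(k, M, β)}`. -/
theorem holdout_pac (M : ℕ) (hM : 1 ≤ M) (p : ℝ) (hp0 : 0 ≤ p) (hp1 : p ≤ 1)
    (β : ℝ) (hβ0 : 0 < β) (hβ1 : β < 1) :
    ∑ k ∈ (Finset.range (M + 1)).filter (fun k => binInv k M β < p),
      (M.choose k : ℝ) * p ^ k * (1 - p) ^ (M - k) ≤ β := by
  set A := (Finset.range (M + 1)).filter (fun k => binInv k M β < p) with hA
  by_cases hAne : A.Nonempty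
  · set k0 := A.max' hAne with hk0
    have hk0A : k0 ∈ A := A.max'_mem hAne
    have hk0M : k0 ≤ M := by
      have := (Finset.mem_filter.1 hk0A).1
      simp only [Finset.mem_range] at this; omega
    have hk0lt : binInv k0 M β < p := (Finset.mem_filter.1 hk0A).2
    have hAeq : A = Finset.range (k0 + 1) := by
      ext k
      simp only [hA, Finset.mem_filter, Finset.mem_range, Nat.lt_succ_iff]
      constructor
      · intro hk
        exact Finset.le_max' A k (Finset.mem_filter.2 ⟨Finset.mem_range.2 (by omega), hk.2⟩)
      · intro hk
        refine ⟨by omega, lt_of_le_of_lt (binInv_mono hk β hβ1.le) hk0lt⟩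
    rw [hAeq]
    have : binCdf k0 M p < β := binCdf_lt_of_binInv_lt hp0 hp1 hk0lt
    unfold binCdf at this
    linarith
  · rw [Finset.not_nonempty_iff_eq_empty] at hAne
    rw [hAne, Finset.sum_empty]
    linarith
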